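/- arXiv:2209.08962 — 18 statements merged into one kernel-verified Lean document; each statement's English description precedes it below -/
import Mathlib

section
/- Let (A,▷,◁) be an anti-dendriform algebra over a field F of characteristic 0. Then the bilinear operation defined by x∘y = x▷y − y◁x makes (A,∘) an anti-pre-Lie algebra, and moreover x∘y − y∘x = x·y − y·x for all x,y ∈ A, where x·y = x▷y + x◁y; in particular (A,·) and (A,∘) have the same commutator bracket. -/
/-- Associativity for a binary operation. -/
def IsAssociative {A : Type*} [AddCommGroup A] (m : A → A → A) : Prop :=
  ∀ x y z : A, m (m x y) z = m x (m y z)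

/-- The anti-dendriform identities for operations `tr` (▷) and `tl` (◁),
with `x·y = tr x y + tl x y`. -/
def IsAntiDendriform {A : Type*} [AddCommGroup A] (tr tl : A → A → A) : Prop :=
  ∀ x y z : A,
    tr x (tr y z) = - tr (tr x y + tl x y) z ∧
    tr x (tr y z) = - tl x (tr y z + tl y z) ∧
    tr x (tr y z) = tl (tl x y) z ∧
    tl (tr x y) z = tr x (tl y z)

/-- The dendriform identities for operations `s` (≻) and `p` (≺),
with `x·y = s x y + p x y`. -/
def IsDendriform {A : Type*} [AddCommGroup A] (s p : A → A → A) : Prop :=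
  ∀ x y z : A,
    s x (s y z) = s (s x y + p x y) z ∧
    p (p x y) z = p x (s y z + p y z) ∧
    p (s x y) z = s x (p y z)

/-- The anti-pre-Lie identities for an operation `c` (∘), with
`[x,y] = c x y - c y x`. -/
def IsAntiPreLie {A : Type*} [AddCommGroup A] (c : A → A → A) : Prop :=
  ∀ x y z : A,
    c x (c y z) - c y (c x z) = c (c y x - c x y) z ∧
    c (c x y - c y x) z + c (c y z - c z y) x + c (c z x - c x z) y = 0

/-- The pre-Lie identity for an operation `m` (∗). -/
def IsPreLie {A : Type*} [AddCommGroup A] (m : A → A → A) : Prop :=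
  ∀ x y z : A, m (m x y) z - m x (m y z) = m (m y x) z - m y (m x z)

/-- The operation `x∘y = x▷y − y◁x` on an anti-dendriform algebra is anti-pre-Lie and has
the same commutator as `x·y = x▷y + x◁y`. -/
theorem antiDendriform_circ_isAntiPreLie
    {F A : Type*} [Field F] [CharZero F] [AddCommGroup A] [Module F A]
    (tr tl : A →ₗ[F] A →ₗ[F] A)
    (h : IsAntiDendriform (fun x y => tr x y) (fun x y => tl x y)) :
    IsAntiPreLie (fun x y : A => tr x y - tl y x) ∧
      ∀ x y : A,
        (tr x y - tl y x) - (tr y x - tl x y) = (tr x y + tl x y) - (tr y x + tl y x) := by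
  have h3 : ∀ a b c : A, tl (tl a b) c = tr a (tr b c) := fun a b c => ((h a b c).2.2.1).symm
  have h4 : ∀ a b c : A, tl (tr a b) c = tr a (tl b c) := fun a b c => (h a b c).2.2.2
  have hrl : ∀ a b c : A, tr (tl a b) c = - tr a (tr b c) - tr (tr a b) c := by
    intro a b c
    have := (h a b c).1
    simp only [map_add, LinearMap.add_apply] at this
    rw [this]; abel
  have hll : ∀ a b c : A, tl a (tl b c) = - tr a (tr b c) - tl a (tr b c) := by
    intro a b c
    have := (h a b c).2.1
    simp only [map_add] at this
    rw [this]; abel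
  constructor
  · intro x y z
    constructor
    · simp only [map_sub, map_add, map_neg, LinearMap.sub_apply, LinearMap.add_apply,
        LinearMap.neg_apply]
      simp only [h3, h4, hrl, hll]
      abel
    · simp only [map_sub, map_add, map_neg, LinearMap.sub_apply, LinearMap.add_apply,
        LinearMap.neg_apply]
      simp only [h3, h4, hrl, hll]
      abel
  · intro x y
    abel
end

section
/- Let (A,·) be an associative algebra over a field F of characteristic 0 containing a nonzero idempotent e (that is, e ≠ 0 and e·e = e). Then there do not exist bilinear operations ▷, ◁ on A with x·y = x▷y + x◁y for all x,y ∈ A making (A,▷,◁) an anti-dendriform algebra. -/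
/-- An associative algebra with a nonzero idempotent admits no compatible anti-dendriform
algebra structure. -/
theorem no_compatible_antiDendriform_of_idempotent
    {F A : Type*} [Field F] [CharZero F] [AddCommGroup A] [Module F A]
    (mul : A →ₗ[F] A →ₗ[F] A)
    (hassoc : IsAssociative (fun x y : A => mul x y))
    (e : A) (he : e ≠ 0) (hid : mul e e = e) :
    ¬ ∃ tr tl : A →ₗ[F] A →ₗ[F] A,
        (∀ x y : A, mul x y = tr x y + tl x y) ∧
        IsAntiDendriform (fun x y => tr x y) (fun x y => tl x y) := by
  rintro ⟨tr, tl, hc, had⟩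
  have hsum : tr e e + tl e e = e := by rw [← hc]; exact hid
  obtain ⟨h1, h2, -, -⟩ := had e e e
  simp only [] at h1 h2
  rw [hsum] at h1 h2
  -- h1 : tr e (tr e e) = - tr e e
  -- h2 : tr e (tr e e) = - tl e e
  have hab : tr e e = tl e e := neg_injective (h1.symm.trans h2)
  have key : tr e e = tr e (tr e e) + tr e (tl e e) := by
    rw [← map_add, hsum]
  rw [← hab, h1] at key
  -- key : tr e e = -tr e e + -tr e e
  have h3 : tr e e + (tr e e + tr e e) = 0 := by
    nth_rewrite 1 [key]
    abel
  have h4 : (3 : F) • tr e e = 0 := by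
    rw [show (3 : F) = 1 + 1 + 1 by norm_num, add_smul, add_smul, one_smul,
      add_assoc]
    exact h3
  have ha : tr e e = 0 := by
    rcases smul_eq_zero.mp h4 with h | h
    · exact absurd h (by norm_num)
    · exact h
  exact he (by rw [← hsum, ← hab, ha, add_zero])
end

section
/- Let A be a vector space over a field F of characteristic 0 with bilinear operations ▷, ◁, and define x·y = x▷y + x◁y. Then (A,▷,◁) is an anti-dendriform algebra if and only if (A,·) is an associative algebra and for all x,y,z ∈ A: x▷(y▷z) = −(x·y)▷z, (x◁y)◁z = −x◁(y·z), and (x▷y)◁z = x▷(y◁z). -/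
/-- `(A,▷,◁)` is anti-dendriform iff `x·y = x▷y + x◁y` is associative and the three
identities of Eq. (2.9) hold. -/
theorem antiDendriform_iff_assoc_and_three_identities
    {F A : Type*} [Field F] [CharZero F] [AddCommGroup A] [Module F A]
    (tr tl : A →ₗ[F] A →ₗ[F] A) :
    IsAntiDendriform (fun x y => tr x y) (fun x y => tl x y) ↔
      (IsAssociative (fun x y : A => tr x y + tl x y) ∧
        ∀ x y z : A,
          tr x (tr y z) = - tr (tr x y + tl x y) z ∧
          tl (tl x y) z = - tl x (tr y z + tl y z) ∧
          tl (tr x y) z = tr x (tl y z)) := by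
  constructor
  · intro h
    refine ⟨?_, fun x y z => ?_⟩
    · intro x y z
      obtain ⟨h1, h2, h3, h4⟩ := h x y z
      simp only [map_add, LinearMap.add_apply] at h1 h2 h3 h4 ⊢
      rw [← h3, h4]
      have e1 : tr (tr x y) z + tr (tl x y) z = -(tr x (tr y z)) := by
        rw [eq_neg_iff_add_eq_zero, add_comm, ← eq_neg_iff_add_eq_zero] ; exact h1.symm ▸ rfl
      rw [e1]
      have e2 : tl x (tr y z) + tl x (tl y z) = -(tr x (tr y z)) := by
        rw [eq_neg_iff_add_eq_zero, add_comm, ← eq_neg_iff_add_eq_zero] ; exact h2.symm ▸ rfl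
      rw [e2]
      abel
    · obtain ⟨h1, h2, h3, h4⟩ := h x y z
      simp only [map_add, LinearMap.add_apply] at h1 h2 h3 h4 ⊢
      exact ⟨h1, h3 ▸ h2, h4⟩
  · rintro ⟨hassoc, h⟩
    intro x y z
    obtain ⟨h1, h2, h3⟩ := h x y z
    have ha := hassoc x y z
    simp only [map_add, LinearMap.add_apply] at ha h1 h2 ⊢
    -- derive key : tr x (tr y z) = -(tl x (tr y z) + tl x (tl y z))
    have key : tr x (tr y z) = -(tl x (tr y z) + tl x (tl y z)) := by
      linear_combination (norm := module) (-(2:F)⁻¹) • ha + ((2:F)⁻¹) • h1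
        + ((2:F)⁻¹) • h2 + ((2:F)⁻¹) • h3
    refine ⟨h1, key, ?_, h3⟩
    rw [key, ← h2]
end

section
/- Let A be a vector space over a field F of characteristic 0 with bilinear operations ▷, ◁. On the direct sum Â = A ⊕ A define the bilinear operation (x,a)·(y,b) = (x▷y + x◁y, −(x▷b) − (a◁y)). Then (Â,·) is an associative algebra if and only if (A,▷,◁) is an anti-dendriform algebra. -/
/-- The double-space product `(x,a)·(y,b) = (x▷y + x◁y, −x▷b − a◁y)` on `A ⊕ A` is
associative iff `(A,▷,◁)` is an anti-dendriform algebra. -/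
theorem doubleSpace_assoc_iff_antiDendriform
    {F A : Type*} [Field F] [CharZero F] [AddCommGroup A] [Module F A]
    (tr tl : A →ₗ[F] A →ₗ[F] A) :
    IsAssociative (fun u v : A × A =>
        ((tr u.1 v.1 + tl u.1 v.1, - tr u.1 v.2 - tl u.2 v.1) : A × A)) ↔
      IsAntiDendriform (fun x y => tr x y) (fun x y => tl x y) := by
  constructor
  · intro h
    simp only [IsAntiDendriform]
    intro x y z
    have h0 := h (x,0) (y,0) (z,0)
    have h1 := h (x,0) (y,0) (0,z)
    have h2 := h (x,0) (0,y) (z,0)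
    have h3 := h (0,x) (y,0) (z,0)
    simp [Prod.ext_iff, map_add] at h0 h1 h2 h3
    have key : tr (tr x y) z + tr (tl x y) z = tl x (tr y z) + tl x (tl y z) := by
      linear_combination (norm := module) (2:F)⁻¹ • (h0 - h1 - h2 - h3)
    refine ⟨?_, ?_, ?_, ?_⟩
    · simp only [map_add, LinearMap.add_apply]
      linear_combination (norm := module) -h1
    · simp only [map_add]
      linear_combination (norm := module) -h1 - key
    · linear_combination (norm := module) -h1 - key - h3
    · exact h2
  · intro hA
    simp only [IsAntiDendriform] at hA
    rintro ⟨x, a⟩ ⟨y, b⟩ ⟨z, c⟩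
    obtain ⟨H1, H2, H3, H4⟩ := hA x y z
    obtain ⟨A1, -, -, -⟩ := hA x y c
    obtain ⟨-, -, -, A4⟩ := hA x b z
    obtain ⟨-, B2, B3, -⟩ := hA a y z
    simp only [Prod.ext_iff, map_add, map_neg, map_sub, LinearMap.add_apply,
      LinearMap.neg_apply, LinearMap.sub_apply] at *
    constructor
    · linear_combination (norm := module) H1 - H2 - H3 + H4
    · linear_combination (norm := module) -A1 + A4 + B2 - B3
end

section
/- Let (A,·) be an associative algebra over a field F of characteristic 0, (V,l,r) a bimodule of (A,·), and T : V → A an anti-O-operator of (A,·) associated to (V,l,r). Define bilinear operations on V by u▷v = −l(T(u))v and u◁v = −r(T(v))u. Then (V,▷,◁) is an anti-dendriform algebra if and only if T is strong. -/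
/-- If `T` is an anti-O-operator of an associative algebra `(A,·)` associated to a bimodule
`(V,l,r)`, then the induced operations `u▷v = −l(T u)v`, `u◁v = −r(T v)u` make `V` an
anti-dendriform algebra iff `T` is strong. -/
theorem antiOOperator_induced_antiDendriform_iff_strong
    {F A V : Type*} [Field F] [CharZero F] [AddCommGroup A] [Module F A]
    [AddCommGroup V] [Module F V]
    (mul : A →ₗ[F] A →ₗ[F] A)
    (hassoc : IsAssociative (fun x y : A => mul x y))
    (l r : A →ₗ[F] V →ₗ[F] V)
    (hl : ∀ (x y : A) (v : V), l (mul x y) v = l x (l y v))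
    (hr : ∀ (x y : A) (v : V), r (mul x y) v = r y (r x v))
    (hlr : ∀ (x y : A) (v : V), l x (r y v) = r y (l x v))
    (T : V →ₗ[F] A)
    (hT : ∀ u v : V, mul (T u) (T v) = - T (l (T u) v + r (T v) u)) :
    IsAntiDendriform (fun u v : V => - l (T u) v) (fun u v : V => - r (T v) u) ↔
      ∀ u v w : V, l (mul (T u) (T v)) w = r (mul (T v) (T w)) u := by
  have hTm : ∀ u v : V, T (- l (T u) v + - r (T v) u) = mul (T u) (T v) := by
    intro u v
    rw [← neg_add, map_neg, hT]
  constructor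
  · intro h u v w
    have h3 := (h u v w).2.2.1
    simp only [map_neg, neg_neg] at h3
    rw [hl, hr]
    exact h3
  · intro hs x y z
    refine ⟨?_, ?_, ?_, ?_⟩
    · simp only [map_neg, neg_neg]
      rw [hTm x y, hl]
    · simp only [map_neg, neg_neg]
      rw [hTm y z, ← hl, hs]
    · simp only [map_neg, neg_neg]
      rw [← hl, ← hr, hs]
    · simp only [map_neg, neg_neg]
      exact (hlr _ _ _).symm
end

section
/- Let (A,·) be an associative algebra over a field F of characteristic 0 and P : A → A a strong anti-Rota-Baxter operator. Then the bilinear operations x▷y = −P(x)·y and x◁y = −x·P(y) make (A,▷,◁) an anti-dendriform algebra. -/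
/-- A strong anti-Rota-Baxter operator `P` on an associative algebra `(A,·)` induces an
anti-dendriform algebra via `x▷y = −P(x)·y`, `x◁y = −x·P(y)`. -/
theorem strong_antiRotaBaxter_gives_antiDendriform
    {F A : Type*} [Field F] [CharZero F] [AddCommGroup A] [Module F A]
    (mul : A →ₗ[F] A →ₗ[F] A)
    (hassoc : IsAssociative (fun x y : A => mul x y))
    (P : A →ₗ[F] A)
    (hP : ∀ x y : A, mul (P x) (P y) = - P (mul (P x) y + mul x (P y)))
    (hstrong : ∀ x y z : A, mul (mul (P x) (P y)) z = mul x (mul (P y) (P z))) :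
    IsAntiDendriform (fun x y : A => - mul (P x) y) (fun x y : A => - mul x (P y)) := by
  intro x y z
  have hassoc' : ∀ a b c : A, mul (mul a b) c = mul a (mul b c) := hassoc
  have key : ∀ a b : A, mul (P (mul (P a) b)) + mul (P (mul a (P b))) = - mul (mul (P a) (P b)) := by
    intro a b
    have h := hP a b
    rw [map_add] at h
    rw [h]; simp
  simp only [map_neg, map_add, map_sub, LinearMap.neg_apply, LinearMap.add_apply, neg_neg,
    neg_add_rev]
  refine ⟨?_, ?_, ?_, ?_⟩
  · have h1 := congrArg (fun f : A →ₗ[F] A => f z) (key x y)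
    simp only [LinearMap.add_apply, LinearMap.neg_apply] at h1
    rw [← neg_add, h1, neg_neg, hassoc']
  · have h2 := key y z
    have h2' : P (mul (P y) z) + P (mul y (P z)) = - mul (P y) (P z) := by
      have h := hP y z
      rw [map_add] at h
      rw [h]; abel
    rw [← neg_add, ← map_add, h2', map_neg, neg_neg, ← hstrong, hassoc']
  · rw [hassoc', ← hstrong, hassoc']
  · rw [hassoc']
end

section
/- Let (A,·) be an associative algebra over a field F of characteristic 0, (V,l,r) a bimodule of (A,·), and T : V → A a bijective anti-O-operator of (A,·) associated to (V,l,r). Then T is strong, i.e. l(T(u)·T(v))w = r(T(v)·T(w))u for all u,v,w ∈ V. -/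
/-- A bijective anti-O-operator of an associative algebra is automatically strong. -/
theorem bijective_antiOOperator_is_strong
    {F A V : Type*} [Field F] [CharZero F] [AddCommGroup A] [Module F A]
    [AddCommGroup V] [Module F V]
    (mul : A →ₗ[F] A →ₗ[F] A)
    (hassoc : IsAssociative (fun x y : A => mul x y))
    (l r : A →ₗ[F] V →ₗ[F] V)
    (hl : ∀ (x y : A) (v : V), l (mul x y) v = l x (l y v))
    (hr : ∀ (x y : A) (v : V), r (mul x y) v = r y (r x v))
    (hlr : ∀ (x y : A) (v : V), l x (r y v) = r y (l x v))
    (T : V →ₗ[F] A)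
    (hT : ∀ u v : V, mul (T u) (T v) = - T (l (T u) v + r (T v) u))
    (hbij : Function.Bijective T) :
    ∀ u v w : V, l (mul (T u) (T v)) w = r (mul (T v) (T w)) u := by
  intro u v w
  have hs : T (l (T u) v + r (T v) u) = - mul (T u) (T v) := by
    rw [hT u v, neg_neg]
  have ht : T (l (T v) w + r (T w) v) = - mul (T v) (T w) := by
    rw [hT v w, neg_neg]
  have e1 : mul (mul (T u) (T v)) (T w)
      = T (-(l (T u) (l (T v) w)) + (r (T w) (l (T u) v) + r (T w) (r (T v) u))) := by
    rw [hT u v, map_neg mul, LinearMap.neg_apply, hT, neg_neg]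
    congr 1
    rw [hs]
    simp only [map_neg, LinearMap.neg_apply, map_add, hl]
  have e2 : mul (T u) (mul (T v) (T w))
      = T (l (T u) (r (T w) v) + (l (T u) (l (T v) w) - r (T w) (r (T v) u))) := by
    rw [hT v w, map_neg (mul (T u)), hT, neg_neg]
    congr 1
    rw [ht]
    simp only [map_neg, LinearMap.neg_apply, map_add, hr]
    abel
  have key : (-(l (T u) (l (T v) w)) + (r (T w) (l (T u) v) + r (T w) (r (T v) u)))
      = (l (T u) (r (T w) v) + (l (T u) (l (T v) w) - r (T w) (r (T v) u))) :=
    hbij.injective (e1.symm.trans ((hassoc (T u) (T v) (T w)).trans e2))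
  rw [hlr] at key
  have h2 : r (T w) (r (T v) u) + r (T w) (r (T v) u)
      = l (T u) (l (T v) w) + l (T u) (l (T v) w) := by
    calc r (T w) (r (T v) u) + r (T w) (r (T v) u)
        = (-(l (T u) (l (T v) w)) + (r (T w) (l (T u) v) + r (T w) (r (T v) u)))
          + (l (T u) (l (T v) w) + r (T w) (r (T v) u) - r (T w) (l (T u) v)) := by abel
      _ = (r (T w) (l (T u) v) + (l (T u) (l (T v) w) - r (T w) (r (T v) u)))
          + (l (T u) (l (T v) w) + r (T w) (r (T v) u) - r (T w) (l (T u) v)) := by rw [key]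
      _ = l (T u) (l (T v) w) + l (T u) (l (T v) w) := by abel
  have h4 : (2 : F) • (l (T u) (l (T v) w)) = (2 : F) • (r (T w) (r (T v) u)) := by
    rw [two_smul, two_smul]; exact h2.symm
  rw [hl, hr]
  exact smul_right_injective V two_ne_zero h4
end

section
/- Let (A,·) be an associative algebra over a field F of characteristic 0, (V,l,r) a bimodule of (A,·), and T : V → A a linear map. Let A ⋉ V denote the vector space A ⊕ V with the associative product (x,u)·(y,v) = (x·y, l(x)v + r(y)u), and define the linear map T̂ : A ⊕ V → A ⊕ V by T̂(x,u) = (T(u), 0). Then T is an anti-O-operator of (A,·) associated to (V,l,r) if and only if T̂ is an anti-Rota-Baxter operator on A ⋉ V. -/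
/-- `T : V → A` is an anti-O-operator of `(A,·)` associated to the bimodule `(V,l,r)` iff
`T̂(x,u) = (T u, 0)` is an anti-Rota-Baxter operator on the semidirect product `A ⋉ V`. -/
theorem antiOOperator_iff_hat_antiRotaBaxter
    {F A V : Type*} [Field F] [CharZero F] [AddCommGroup A] [Module F A]
    [AddCommGroup V] [Module F V]
    (mul : A →ₗ[F] A →ₗ[F] A)
    (hassoc : IsAssociative (fun x y : A => mul x y))
    (l r : A →ₗ[F] V →ₗ[F] V)
    (hl : ∀ (x y : A) (v : V), l (mul x y) v = l x (l y v))
    (hr : ∀ (x y : A) (v : V), r (mul x y) v = r y (r x v))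
    (hlr : ∀ (x y : A) (v : V), l x (r y v) = r y (l x v))
    (T : V →ₗ[F] A) :
    let smul : A × V → A × V → A × V :=
      fun p q => (mul p.1 q.1, l p.1 q.2 + r q.1 p.2)
    let That : A × V → A × V := fun p => (T p.2, 0)
    ((∀ u v : V, mul (T u) (T v) = - T (l (T u) v + r (T v) u)) ↔
      ∀ p q : A × V,
        smul (That p) (That q) = - That (smul (That p) q + smul p (That q))) := by
  intro smul That
  constructor
  · intro h p q
    simp only [smul, That, Prod.mk.injEq, map_zero, add_zero, zero_add, map_add,
      Prod.neg_mk, neg_zero]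
    exact ⟨by simpa using h p.2 q.2, trivial⟩
  · intro h u v
    have := h (0, u) (0, v)
    simp only [smul, That, Prod.mk.injEq, map_zero, add_zero, zero_add, map_add,
      Prod.neg_mk, neg_zero] at this
    simpa using this.1
end

section
/- Let (A,·) be a finite-dimensional associative algebra over a field F of characteristic 0 equipped with a nondegenerate commutative Connes cocycle B. Then there exist bilinear operations ▷, ◁ on A satisfying B(x▷y, z) = −B(y, z·x) and B(x◁y, z) = −B(x, y·z) for all x,y,z ∈ A, such that (A,▷,◁) is an anti-dendriform algebra with x·y = x▷y + x◁y for all x,y ∈ A. -/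
/-- A finite-dimensional associative algebra with a nondegenerate commutative Connes cocycle
admits a compatible anti-dendriform algebra structure defined by
`B(x▷y, z) = −B(y, z·x)` and `B(x◁y, z) = −B(x, y·z)`. -/
theorem connesCocycle_gives_compatible_antiDendriform
    {F A : Type*} [Field F] [CharZero F] [AddCommGroup A] [Module F A]
    [FiniteDimensional F A]
    (mul : A →ₗ[F] A →ₗ[F] A)
    (hassoc : IsAssociative (fun x y : A => mul x y))
    (B : A →ₗ[F] A →ₗ[F] F)
    (hsymm : ∀ x y : A, B x y = B y x)
    (hcocycle : ∀ x y z : A, B (mul x y) z + B (mul y z) x + B (mul z x) y = 0)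
    (hnondeg : ∀ x : A, (∀ y : A, B x y = 0) → x = 0) :
    ∃ tr tl : A →ₗ[F] A →ₗ[F] A,
      (∀ x y z : A, B (tr x y) z = - B y (mul z x) ∧ B (tl x y) z = - B x (mul y z)) ∧
      (∀ x y : A, mul x y = tr x y + tl x y) ∧
      IsAntiDendriform (fun x y => tr x y) (fun x y => tl x y) := by
  classical
  have hinj : Function.Injective (B : A →ₗ[F] Module.Dual F A) := by
    rw [← LinearMap.ker_eq_bot, LinearMap.ker_eq_bot']
    intro x hx
    exact hnondeg x fun y => by
      have := congrArg (fun f : Module.Dual F A => f y) hx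
      simpa using this
  have hdim : Module.finrank F A = Module.finrank F (Module.Dual F A) :=
    (Subspace.dual_finrank_eq).symm
  set e : A ≃ₗ[F] Module.Dual F A := B.linearEquivOfInjective hinj hdim with he
  have heB : ∀ a : A, e a = B a := fun a => B.linearEquivOfInjective_apply hinj hdim a
  have ha : ∀ x y z : A, mul (mul x y) z = mul x (mul y z) := hassoc
  let g : A →ₗ[F] A →ₗ[F] Module.Dual F A :=
    LinearMap.mk₂ F (fun x y => -((B y).comp (mul.flip x)))
      (fun x x' y => by ext z; simp; try exact add_comm _ _)
      (fun c x y => by ext z; simp; try exact add_comm _ _)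
      (fun x y y' => by ext z; simp; try exact add_comm _ _)
      (fun c x y => by ext z; simp; try exact add_comm _ _)
  let h : A →ₗ[F] A →ₗ[F] Module.Dual F A :=
    LinearMap.mk₂ F (fun x y => -((B x).comp (mul y)))
      (fun x x' y => by ext z; simp; try exact add_comm _ _)
      (fun c x y => by ext z; simp; try exact add_comm _ _)
      (fun x y y' => by ext z; simp; try exact add_comm _ _)
      (fun c x y => by ext z; simp; try exact add_comm _ _)
  let tr : A →ₗ[F] A →ₗ[F] A :=
    LinearMap.mk₂ F (fun x y => e.symm (g x y))
      (fun x x' y => by simp [map_add])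
      (fun c x y => by simp)
      (fun x y y' => by simp [map_add])
      (fun c x y => by simp)
  let tl : A →ₗ[F] A →ₗ[F] A :=
    LinearMap.mk₂ F (fun x y => e.symm (h x y))
      (fun x x' y => by simp [map_add])
      (fun c x y => by simp)
      (fun x y y' => by simp [map_add])
      (fun c x y => by simp)
  have htr : ∀ x y z : A, B (tr x y) z = - B y (mul z x) := by
    intro x y z
    have := congrArg (fun f : Module.Dual F A => f z)
      (heB (e.symm (g x y)) ▸ e.apply_symm_apply (g x y))
    simpa [tr, g] using this
  have htl : ∀ x y z : A, B (tl x y) z = - B x (mul y z) := by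
    intro x y z
    have := congrArg (fun f : Module.Dual F A => f z)
      (heB (e.symm (h x y)) ▸ e.apply_symm_apply (h x y))
    simpa [tl, h] using this
  have hext : ∀ u v : A, (∀ w : A, B u w = B v w) → u = v := by
    intro u v huv
    have h0 : u - v = 0 := by
      refine hnondeg _ fun w => ?_
      simp [map_sub, huv w]
    exact sub_eq_zero.mp h0
  -- key symmetry of the 4-linear form
  have hT : ∀ x y z w : A, B (mul (mul x y) z) w = B (mul (mul z w) x) y := by
    intro x y z w
    have e1 := hcocycle y (mul z w) x
    have e2 := hcocycle (mul x y) z w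
    have e1' := hcocycle z (mul w x) y
    have e2' := hcocycle (mul y z) w x
    simp only [← ha] at e1 e2 e1' e2'
    linear_combination (e2 + e2' - e1 - e1' + hsymm (mul x y) (mul z w)
      + hsymm (mul y z) (mul w x)) / 2
  have hT2 : ∀ x y z w : A, B z (mul w (mul x y)) = B x (mul y (mul z w)) := by
    intro x y z w
    rw [hsymm z, ← ha w x y, hT w x y z, ha, hsymm]
  have hmul : ∀ x y : A, mul x y = tr x y + tl x y := by
    intro x y
    apply hext
    intro w
    rw [map_add, LinearMap.add_apply, htr, htl]
    linear_combination hcocycle x y w + hsymm y (mul w x) + hsymm x (mul y w)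
  refine ⟨tr, tl, fun x y z => ⟨htr x y z, htl x y z⟩, hmul, fun x y z => ?_⟩
  refine ⟨?_, ?_, ?_, ?_⟩
  · show tr x (tr y z) = - tr (tr x y + tl x y) z
    rw [← hmul]
    apply hext
    intro w
    simp only [map_neg, LinearMap.neg_apply, htr, htl, ha, neg_neg]
  · show tr x (tr y z) = - tl x (tr y z + tl y z)
    rw [← hmul]
    apply hext
    intro w
    simp only [map_neg, LinearMap.neg_apply, htr, htl, ha, neg_neg]
    exact hT2 x y z w
  · show tr x (tr y z) = tl (tl x y) z
    apply hext
    intro w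
    simp only [htr, htl, ha, neg_neg]
    exact hT2 x y z w
  · show tl (tr x y) z = tr x (tl y z)
    apply hext
    intro w
    simp only [htr, htl, ha, neg_neg]
end

section
/- Let (A,▷,◁) be an anti-dendriform algebra over a field F of characteristic 0 and B a symmetric invariant bilinear form on (A,▷,◁). Then B is a commutative Connes cocycle on the associated associative algebra (A,·), where x·y = x▷y + x◁y; that is, B(x·y,z) + B(y·z,x) + B(z·x,y) = 0 for all x,y,z ∈ A. -/
/-- A symmetric invariant bilinear form on an anti-dendriform algebra is a commutative
Connes cocycle on the associated associative algebra. -/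
theorem symmetric_invariant_form_is_commutative_connesCocycle
    {F A : Type*} [Field F] [CharZero F] [AddCommGroup A] [Module F A]
    (tr tl : A →ₗ[F] A →ₗ[F] A)
    (h : IsAntiDendriform (fun x y => tr x y) (fun x y => tl x y))
    (B : A →ₗ[F] A →ₗ[F] F)
    (hsymm : ∀ x y : A, B x y = B y x)
    (hinv₁ : ∀ x y z : A, B (tr x y) z = - B y (tr z x + tl z x))
    (hinv₂ : ∀ x y z : A, B (tl x y) z = - B x (tr y z + tl y z)) :
    ∀ x y z : A,
      B (tr x y + tl x y) z + B (tr y z + tl y z) x + B (tr z x + tl z x) y = 0 := by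
  intro x y z
  have e1 : B (tr x y + tl x y) z = B (tr x y) z + B (tl x y) z := by
    simp [map_add]
  rw [e1, hinv₁ x y z, hinv₂ x y z, hsymm (tr y z + tl y z) x,
    hsymm (tr z x + tl z x) y]
  ring
end

section
/- Let (A,≻,≺) be a dendriform algebra over a field F of characteristic 0 and q ∈ F with q ≠ 0, q ≠ 1, q ≠ −1. Let (A,▷,◁) be the q-algebra of (A,≻,≺), i.e. x▷y = x≻y + q(x≺y) and x◁y = x≺y + q(x≻y). Then (A,▷,◁) is an anti-dendriform algebra if and only if for all x,y,z ∈ A: x≻(y≻z) = (x≺y)≺z, (x≺y)≻z = x≺(y≻z), and (q²+3q+2)((x≺y)≺z) + (q²+2q)(x≻(y≺z)) + (q²−q)(x≺(y≺z)) = 0. -/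
/-- The `q`-algebra of a dendriform algebra is anti-dendriform iff the three identities
(3.4)-(3.6) hold. -/
theorem qAlgebra_of_dendriform_antiDendriform_iff
    {F A : Type*} [Field F] [CharZero F] [AddCommGroup A] [Module F A]
    (s p : A →ₗ[F] A →ₗ[F] A)
    (hd : IsDendriform (fun x y => s x y) (fun x y => p x y))
    (q : F) (hq0 : q ≠ 0) (hq1 : q ≠ 1) (hqm1 : q ≠ -1) :
    IsAntiDendriform (fun x y : A => s x y + q • p x y) (fun x y : A => p x y + q • s x y) ↔
      ∀ x y z : A,
        s x (s y z) = p (p x y) z ∧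
        s (p x y) z = p x (s y z) ∧
        (q ^ 2 + 3 * q + 2) • p (p x y) z + (q ^ 2 + 2 * q) • s x (p y z)
          + (q ^ 2 - q) • p x (p y z) = 0 := by
    -- Expanded dendriform identities
  have hd1 : ∀ x y z : A, s x (s y z) = s (s x y) z + s (p x y) z := fun x y z => by
    simpa [map_add, LinearMap.add_apply] using (hd x y z).1
  have hd2 : ∀ x y z : A, p (p x y) z = p x (s y z) + p x (p y z) := fun x y z => by
    simpa [map_add] using (hd x y z).2.1
  have hd3 : ∀ x y z : A, p (s x y) z = s x (p y z) := fun x y z => (hd x y z).2.2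
  have hq2 : q ^ 2 - q ≠ 0 := fun h =>
    mul_ne_zero hq0 (sub_ne_zero.2 hq1) (by linear_combination h)
  have hq3 : (1 : F) - q ^ 2 ≠ 0 := by
    have ha : (1 : F) - q ≠ 0 := sub_ne_zero.2 (Ne.symm hq1)
    have hb : (1 : F) + q ≠ 0 := fun h' => hqm1 (by linear_combination h')
    intro h
    exact mul_ne_zero ha hb (by linear_combination h)
  constructor
  · intro h x y z
    obtain ⟨h1, -, h3, h4⟩ := h x y z
    simp only [map_add, map_smul, LinearMap.add_apply, LinearMap.smul_apply] at h1 h3 h4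
    -- g2 : B2 = A3
    have g2 : s (p x y) z = p x (s y z) := by
      refine smul_right_injective A hq2 ?_
      linear_combination (norm := module) h4 + q • hd1 x y z - q • hd2 x y z - hd3 x y z
    -- gA : A1 = A3 + A4
    have gA : s x (s y z) = p x (s y z) + p x (p y z) := by
      refine smul_right_injective A hq3 ?_
      linear_combination (norm := module) h3 + (-q^2) • hd1 x y z + hd2 x y z
        + q • hd3 x y z + (q - q^2) • g2
    have g1 : s x (s y z) = p (p x y) z := by rw [gA, hd2]
    refine ⟨g1, g2, ?_⟩
    linear_combination (norm := module) h1 + (1+q) • hd1 x y z + (2*q+2) • hd2 x y z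
      + (-q - q^2) • hd3 x y z + (-(2+q)) • gA
  · intro h x y z
    obtain ⟨g1, g2, g3⟩ := h x y z
    refine ⟨?_, ?_, ?_, ?_⟩ <;>
      simp only [map_add, map_smul, LinearMap.add_apply, LinearMap.smul_apply] <;>
      [ (linear_combination (norm := module) (-(1+q)) • hd1 x y z + (-q) • hd2 x y z
          + (q + q^2) • hd3 x y z + (q+2) • g1 + g3);
        (linear_combination (norm := module) (-2*q-1) • hd2 x y z
          + (q^2+q+1) • g1 + g3);
        (linear_combination (norm := module) (q^2) • hd1 x y z + (-q^2) • hd2 x y z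
          + (-q) • hd3 x y z + (1-q^2) • g1 + (q^2-q) • g2);
        (linear_combination (norm := module) (-q) • hd1 x y z + q • hd2 x y z
          + hd3 x y z + (q^2-q) • g2) ]
end

section
/- Let (A,▷,◁) be an anti-dendriform algebra over a field F of characteristic 0 and q ∈ F with q ≠ 0, q ≠ 1, q ≠ −1. Let (A,≻,≺) be the (−q)-algebra of (A,▷,◁), i.e. x≻y = x▷y − q(x◁y) and x≺y = x◁y − q(x▷y). Then (A,≻,≺) is a dendriform algebra if and only if for all x,y,z ∈ A: (x◁y)▷z = x◁(y▷z) and (−q²+q+2)((x◁y)◁z) − q²((x▷y)◁z) + (q²+q)(x◁(y◁z)) = 0. -/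
/-- The `(−q)`-algebra of an anti-dendriform algebra is dendriform iff the two identities
(3.9)-(3.10) hold. -/
theorem negQAlgebra_of_antiDendriform_dendriform_iff
    {F A : Type*} [Field F] [CharZero F] [AddCommGroup A] [Module F A]
    (tr tl : A →ₗ[F] A →ₗ[F] A)
    (h : IsAntiDendriform (fun x y => tr x y) (fun x y => tl x y))
    (q : F) (hq0 : q ≠ 0) (hq1 : q ≠ 1) (hqm1 : q ≠ -1) :
    IsDendriform (fun x y : A => tr x y - q • tl x y) (fun x y : A => tl x y - q • tr x y) ↔
      ∀ x y z : A,
        tr (tl x y) z = tl x (tr y z) ∧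
        (-q ^ 2 + q + 2) • tl (tl x y) z - q ^ 2 • tl (tr x y) z
          + (q ^ 2 + q) • tl x (tl y z) = 0 := by
  have hqq : q + q ^ 2 ≠ 0 := by
    have h1 : q + q ^ 2 = q * (1 + q) := by ring
    rw [h1]
    exact mul_ne_zero hq0 (fun hc => hqm1 (by linear_combination hc))
  constructor
  · intro hd x y z
    obtain ⟨A1, A2, A3, A4⟩ := h x y z
    obtain ⟨D1, D2, D3⟩ := hd x y z
    simp only [map_add, map_sub, map_smul, LinearMap.add_apply, LinearMap.sub_apply,
      LinearMap.smul_apply] at A1 A2 A3 A4 D1 D2 D3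
    refine ⟨?_, ?_⟩
    · have key : (q + q ^ 2) • (tr (tl x y) z - tl x (tr y z)) = 0 := by
        linear_combination (norm := module) D3 - A4 - q • A3 + q • A1 - q • A2
      have h2 := (smul_eq_zero.mp key).resolve_left hqq
      exact sub_eq_zero.mp h2
    · linear_combination (norm := module) D1 - (2:F) • A3 - q • A4 + (1-q) • A1 + q • A2
  · intro hc x y z
    obtain ⟨A1, A2, A3, A4⟩ := h x y z
    obtain ⟨C1, C2⟩ := hc x y z
    simp only [map_add, map_sub, map_smul, LinearMap.add_apply, LinearMap.sub_apply,
      LinearMap.smul_apply] at A1 A2 A3 A4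
    refine ⟨?_, ?_, ?_⟩ <;>
      simp only [map_add, map_sub, map_smul, LinearMap.add_apply, LinearMap.sub_apply,
        LinearMap.smul_apply]
    · linear_combination (norm := module) C2 + (2:F) • A3 + q • A4 - (1-q) • A1 - q • A2
    · linear_combination (norm := module) (-q-q^2) • C1 + C2 + (1+q-q^2) • A3
        + (q^2-q) • A4 + q^2 • A1 + (-1-q^2) • A2
    · linear_combination (norm := module) (q+q^2) • C1 + A4 + q • A3 - q • A1 + q • A2
end

section
/- Let A be a vector space over a field F of characteristic 0 with bilinear operations ≻, ≺, let q ∈ F with q ≠ 0, q ≠ 1, q ≠ −1, and define x▷y = x≻y + q(x≺y), x◁y = x≺y + q(x≻y). Then (A,≻,≺) is a dendriform algebra satisfying x≻(y≻z) = (x≺y)≺z, (x≺y)≻z = x≺(y≻z), and (q²+3q+2)((x≺y)≺z) + (q²+2q)(x≻(y≺z)) + (q²−q)(x≺(y≺z)) = 0 for all x,y,z, if and only if (A,▷,◁) is an anti-dendriform algebra satisfying (x◁y)▷z = x◁(y▷z) and (−q²+q+2)((x◁y)◁z) − q²((x▷y)◁z) + (q²+q)(x◁(y◁z)) = 0 for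 all x,y,z. -/
/-- `(A,≻,≺)` is a dendriform algebra satisfying (3.4)-(3.6) iff its `q`-algebra
`(A,▷,◁)` is an anti-dendriform algebra satisfying (3.9)-(3.10). -/
theorem dendriform_subclass_iff_qAlgebra_antiDendriform_subclass
    {F A : Type*} [Field F] [CharZero F] [AddCommGroup A] [Module F A]
    (s p : A →ₗ[F] A →ₗ[F] A)
    (q : F) (hq0 : q ≠ 0) (hq1 : q ≠ 1) (hqm1 : q ≠ -1) :
    let tr : A → A → A := fun x y => s x y + q • p x y
    let tl : A → A → A := fun x y => p x y + q • s x y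
    ((IsDendriform (fun x y => s x y) (fun x y => p x y) ∧
        ∀ x y z : A,
          s x (s y z) = p (p x y) z ∧
          s (p x y) z = p x (s y z) ∧
          (q ^ 2 + 3 * q + 2) • p (p x y) z + (q ^ 2 + 2 * q) • s x (p y z)
            + (q ^ 2 - q) • p x (p y z) = 0) ↔
      (IsAntiDendriform tr tl ∧
        ∀ x y z : A,
          tr (tl x y) z = tl x (tr y z) ∧
          (-q ^ 2 + q + 2) • tl (tl x y) z - q ^ 2 • tl (tr x y) z
            + (q ^ 2 + q) • tl x (tl y z) = 0)) := by
  intro tr tl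
  have h21 : (q ^ 2 - 1 : F) ≠ 0 := by
    have e : q ^ 2 - 1 = (q - 1) * (q + 1) := by ring
    rw [e]
    exact mul_ne_zero (sub_ne_zero.mpr hq1) (fun h => hqm1 (by linear_combination h))
  have hne : ((q ^ 2 - 1) ^ 2 : F) ≠ 0 := pow_ne_zero 2 h21
  constructor
  · rintro ⟨hD, hE⟩
    constructor
    · intro x y z
      obtain ⟨d0, d1, d2⟩ := hD x y z
      obtain ⟨d3, d4, d5⟩ := hE x y z
      simp only [map_add, LinearMap.add_apply] at d0 d1
      simp only [tr, tl, map_add, map_smul, LinearMap.add_apply, LinearMap.smul_apply]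
      refine ⟨?_, ?_, ?_, ?_⟩
      · linear_combination (norm := module) (-(1+q) : F) • d0 + (-q : F) • d1 + (q+q^2 : F) • d2 + (2+q : F) • d3 + d5
      · linear_combination (norm := module) (-(1+2*q) : F) • d1 + (1+q+q^2 : F) • d3 + d5
      · linear_combination (norm := module) (q^2 : F) • d0 + (-q^2 : F) • d1 + (-q : F) • d2 + (1-q^2 : F) • d3 + (q^2-q : F) • d4
      · linear_combination (norm := module) (-q : F) • d0 + (q : F) • d1 + d2 + (q^2-q : F) • d4
    · intro x y z
      obtain ⟨d0, d1, d2⟩ := hD x y z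
      obtain ⟨d3, d4, d5⟩ := hE x y z
      simp only [map_add, LinearMap.add_apply] at d0 d1
      simp only [tr, tl, map_add, map_smul, LinearMap.add_apply, LinearMap.smul_apply]
      refine ⟨?_, ?_⟩
      · linear_combination (norm := module) (-q : F) • d0 + (q : F) • d1 + (q^2 : F) • d2 + (1-q : F) • d4
      · linear_combination (norm := module) (q^4-2*q^2 : F) • d0 + (-2*q : F) • d1 + (2*q-q^3 : F) • d2 + (q^3+2*q^2 : F) • d3 + (2*q-q^2-q^3 : F) • d4 + d5
  · rintro ⟨hA, hE⟩
    have key : ∀ x y z : A,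
        (s x (s y z) = s (s x y) z + s (p x y) z) ∧
        (p (p x y) z = p x (s y z) + p x (p y z)) ∧
        (p (s x y) z = s x (p y z)) ∧
        (s x (s y z) = p (p x y) z) ∧
        (s (p x y) z = p x (s y z)) ∧
        ((q ^ 2 + 3 * q + 2) • p (p x y) z + (q ^ 2 + 2 * q) • s x (p y z)
            + (q ^ 2 - q) • p x (p y z) = 0) := by
      intro x y z
      obtain ⟨g0, g1, g2, g3⟩ := hA x y z
      obtain ⟨g4, g5⟩ := hE x y z
      simp only [tr, tl, map_add, map_smul, LinearMap.add_apply, LinearMap.smul_apply]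
        at g0 g1 g2 g3 g4 g5
      refine ⟨?_, ?_, ?_, ?_, ?_, ?_⟩
      · refine smul_right_injective A hne ?_
        linear_combination (norm := module) (q-1 : F) • g0 + (-q : F) • g1 + (2 : F) • g2 + (q : F) • g3 + g5
      · refine smul_right_injective A hne ?_
        linear_combination (norm := module) (q^2 : F) • g0 + (-(1+q^2) : F) • g1 + (1+q-q^2 : F) • g2 + (q^2-q : F) • g3 + (-(q+q^2) : F) • g4 + g5
      · refine smul_right_injective A hne ?_
        linear_combination (norm := module) (-q : F) • g0 + (q : F) • g1 + (q : F) • g2 + g3 + (q+q^2 : F) • g4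
      · refine smul_right_injective A hne ?_
        linear_combination (norm := module) (-q^2 : F) • g0 + (q^2 : F) • g1 + g2 + (q : F) • g3 + (q+q^2 : F) • g4
      · refine smul_right_injective A hne ?_
        linear_combination (norm := module) (-q : F) • g0 + (q : F) • g1 + (q : F) • g2 + (q^2 : F) • g3 + (1+q : F) • g4
      · refine smul_right_injective A hne ?_
        linear_combination (norm := module) (2*q^2+3*q^3+q^4 : F) • g0 + (-(2*q+4*q^2+3*q^3) : F) • g1 + (2*q-2*q^3 : F) • g2 + (-2*q-2*q^2+q^3 : F) • g3 + (-(2*q+5*q^2+4*q^3+q^4) : F) • g4 + (1+2*q : F) • g5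
    constructor
    · intro x y z
      obtain ⟨k0, k1, k2, -, -, -⟩ := key x y z
      simp only [map_add, LinearMap.add_apply]
      exact ⟨by linear_combination (norm := module) k0, k1, k2⟩
    · intro x y z
      obtain ⟨-, -, -, k3, k4, k5⟩ := key x y z
      exact ⟨k3, k4, k5⟩
end

section
/- Let A be a vector space over a field F of characteristic 0 with bilinear operations ≻, ≺. Then (A,≻,≺) is a Novikov-type dendriform algebra if and only if for all x,y,z ∈ A: x≻(y≻z) = (x≺y)≺z = x≺(y≻z) = (x≺y)≻z; x≻(y≺z) = (x≻y)≺z; and (x≻y)≻z = x≺(y≺z) = 0. -/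
/-- `(A,≻,≺)` is a Novikov-type dendriform algebra iff the identities
(3.13)-(3.15) hold. -/
theorem novikovTypeDendriform_iff
    {F A : Type*} [Field F] [CharZero F] [AddCommGroup A] [Module F A]
    (s p : A →ₗ[F] A →ₗ[F] A) :
    (IsDendriform (fun x y => s x y) (fun x y => p x y) ∧
        ∀ x y z : A,
          s x (s y z) = p (p x y) z ∧
          s (p x y) z = p x (s y z) ∧
          p x (p y z) = 0) ↔
      ∀ x y z : A,
        s x (s y z) = p (p x y) z ∧
        p (p x y) z = p x (s y z) ∧
        p x (s y z) = s (p x y) z ∧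
        s x (p y z) = p (s x y) z ∧
        s (s x y) z = 0 ∧
        p x (p y z) = 0 := by
  constructor
  · rintro ⟨hD, hN⟩
    intro x y z
    have hd1 := (hD x y z).1
    have hd2 := (hD x y z).2.1
    have hd3 := (hD x y z).2.2
    simp only at hd1 hd2 hd3
    have n1 := (hN x y z).1
    have n2 := (hN x y z).2.1
    have n3 := (hN x y z).2.2
    -- p (p x y) z = p x (s y z)
    have e2 : p (p x y) z = p x (s y z) := by
      rw [hd2, map_add, n3, add_zero]
    have e3 : p x (s y z) = s (p x y) z := n2.symm
    have e5 : s (s x y) z = 0 := by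
      have : s x (s y z) = s (s x y) z + s (p x y) z := by
        rw [hd1, map_add, LinearMap.add_apply]
      have h' : s x (s y z) = s (p x y) z := by
        rw [n1, e2, e3]
      rw [h'] at this
      exact right_eq_add.mp this
    exact ⟨n1, e2, e3, hd3.symm, e5, n3⟩
  · intro h
    constructor
    · intro x y z
      have h1 := (h x y z).1
      have h2 := (h x y z).2.1
      have h3 := (h x y z).2.2.1
      have h4 := (h x y z).2.2.2.1
      have h5 := (h x y z).2.2.2.2.1
      have h6 := (h x y z).2.2.2.2.2
      refine ⟨?_, ?_, ?_⟩
      · simp only [map_add, LinearMap.add_apply, h5, zero_add]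
        rw [h1, h2, h3]
      · simp only [map_add, h6, add_zero]
        rw [h2]
      · simp only
        rw [h4]
    · intro x y z
      exact ⟨(h x y z).1, (h x y z).2.2.1.symm, (h x y z).2.2.2.2.2⟩
end

section
/- Let A be a vector space over a field F of characteristic 0 with bilinear operations ≻, ≺, and define x▷y = x≻y − 2(x≺y), x◁y = x≺y − 2(x≻y). Then (A,≻,≺) is a Novikov-type dendriform algebra if and only if (A,▷,◁) is an admissible Novikov-type dendriform algebra. -/
/-- `(A,≻,≺)` is a Novikov-type dendriform algebra iff its `(−2)`-algebra `(A,▷,◁)` is an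
admissible Novikov-type dendriform algebra. -/
theorem novikovTypeDendriform_iff_neg2Algebra_admissible
    {F A : Type*} [Field F] [CharZero F] [AddCommGroup A] [Module F A]
    (s p : A →ₗ[F] A →ₗ[F] A) :
    let tr : A → A → A := fun x y => s x y - (2 : F) • p x y
    let tl : A → A → A := fun x y => p x y - (2 : F) • s x y
    ((IsDendriform (fun x y => s x y) (fun x y => p x y) ∧
        ∀ x y z : A,
          s x (s y z) = p (p x y) z ∧
          s (p x y) z = p x (s y z) ∧
          p x (p y z) = 0) ↔
      (IsAntiDendriform tr tl ∧
        ∀ x y z : A,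
          tr (tl x y) z = tl x (tr y z) ∧
          tl x (tl y z) = (2 : F) • tl (tr x y + tl x y) z)) := by
  intro tr tl
  constructor
  · rintro ⟨hd, hn⟩
    constructor
    · intro x y z
      obtain ⟨e1, e2, e3⟩ := hd x y z
      obtain ⟨f1, f2, f3⟩ := hn x y z
      simp only [map_add, LinearMap.add_apply] at e1 e2
      refine ⟨?_, ?_, ?_, ?_⟩ <;>
        simp only [tr, tl, map_sub, map_add, map_smul, LinearMap.sub_apply,
          LinearMap.add_apply, LinearMap.smul_apply]
      · linear_combination (norm := module) e1 + (2:F) • e2 + (2:F) • e3 + (6:F) • f3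
      · linear_combination (norm := module) (3:F) • e2 + (3:F) • f1 + (6:F) • f3
      · linear_combination (norm := module) (4:F) • e1 - (4:F) • e2 + (2:F) • e3
          - (3:F) • f1 + (6:F) • f2
      · linear_combination (norm := module) (2:F) • e1 - (2:F) • e2 + e3 + (6:F) • f2
    · intro x y z
      obtain ⟨e1, e2, e3⟩ := hd x y z
      obtain ⟨f1, f2, f3⟩ := hn x y z
      simp only [map_add, LinearMap.add_apply] at e1 e2
      refine ⟨?_, ?_⟩ <;>
        simp only [tr, tl, map_sub, map_add, map_smul, LinearMap.sub_apply,
          LinearMap.add_apply, LinearMap.smul_apply]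
      · linear_combination (norm := module) (2:F) • e1 - (2:F) • e2 + (4:F) • e3 + (3:F) • f2
      · linear_combination (norm := module) (4:F) • e1 + (2:F) • e2 + (2:F) • e3 + (3:F) • f3
  · rintro ⟨ha, hx⟩
    have key : ∀ x y z : A,
        (s x (s y z) = s (s x y + p x y) z ∧
         p (p x y) z = p x (s y z + p y z) ∧
         p (s x y) z = s x (p y z)) ∧
        (s x (s y z) = p (p x y) z ∧
         s (p x y) z = p x (s y z) ∧
         p x (p y z) = 0) := by
      intro x y z
      obtain ⟨h1, h2, h3, h4⟩ := ha x y z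
      obtain ⟨h5, h6⟩ := hx x y z
      simp only [tr, tl, map_sub, map_add, map_smul, LinearMap.sub_apply,
        LinearMap.add_apply, LinearMap.smul_apply] at h1 h2 h3 h4 h5 h6
      refine ⟨⟨?_, ?_, ?_⟩, ?_, ?_, ?_⟩ <;>
        (try simp only [map_add, LinearMap.add_apply])
      · linear_combination (norm := module) (-1/3:F) • h1 + (2/9:F) • h2 + (2/9:F) • h3
          + (-2/9:F) • h4 + (2/9:F) • h6
      · linear_combination (norm := module) (4/9:F) • h1 + (-5/9:F) • h2 + (-5/9:F) • h3
          + (2/3:F) • h4 + (-2/9:F) • h5 + (2/9:F) • h6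
      · linear_combination (norm := module) (2/9:F) • h1 + (-2/9:F) • h2 + (-2/9:F) • h3
          + (1/9:F) • h4 + (2/9:F) • h5
      · linear_combination (norm := module) (-4/9:F) • h1 + (4/9:F) • h2 + (1/9:F) • h3
          + (-2/9:F) • h4 + (2/9:F) • h5
      · linear_combination (norm := module) (2/9:F) • h1 + (-2/9:F) • h2 + (-2/9:F) • h3
          + (4/9:F) • h4 + (-1/9:F) • h5
      · linear_combination (norm := module) (2/9:F) • h2 + (2/9:F) • h3 + (-2/9:F) • h4
          + (-1/9:F) • h6
    exact ⟨fun x y z => (key x y z).1, fun x y z => (key x y z).2⟩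
end

section
/- Let (A,∗) be a pre-Lie algebra over a field F of characteristic 0 and q ∈ F with q ≠ 0, q ≠ 1, q ≠ −1. Define x∘y = x∗y − q(y∗x) (the (−q)-algebra of (A,∗)). Then (A,∘) is an anti-pre-Lie algebra if and only if (2+q)([x,y]∗z) + (−q²−2q)(z∗[x,y]) + (q²−q)((z∗y)∗x − (z∗x)∗y) = 0 for all x,y,z ∈ A, where [x,y] = x∗y − y∗x. -/
/-- The `(−q)`-algebra of a pre-Lie algebra is anti-pre-Lie iff identity (3.19) holds. -/
theorem negQAlgebra_of_preLie_antiPreLie_iff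
    {F A : Type*} [Field F] [CharZero F] [AddCommGroup A] [Module F A]
    (m : A →ₗ[F] A →ₗ[F] A)
    (hp : IsPreLie (fun x y => m x y))
    (q : F) (hq0 : q ≠ 0) (hq1 : q ≠ 1) (hqm1 : q ≠ -1) :
    IsAntiPreLie (fun x y : A => m x y - q • m y x) ↔
      ∀ x y z : A,
        (2 + q) • m (m x y - m y x) z + (-q ^ 2 - 2 * q) • m z (m x y - m y x)
          + (q ^ 2 - q) • (m (m z y) x - m (m z x) y) = 0 := by
  simp only [IsPreLie] at hp
  constructor
  · intro h x y z
    have h1 := (h x y z).1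
    simp only [map_sub, map_smul, LinearMap.sub_apply, LinearMap.smul_apply, smul_sub] at h1 ⊢
    linear_combination (norm := module) h1 + hp x y z - q • hp x z y + q • hp y z x
  · intro h x y z
    refine ⟨?_, ?_⟩
    · have h1 := h x y z
      simp only [map_sub, map_smul, LinearMap.sub_apply, LinearMap.smul_apply, smul_sub] at h1 ⊢
      linear_combination (norm := module) h1 - hp x y z + q • hp x z y - q • hp y z x
    · have h1 := h x y z
      have h2 := h y z x
      have h3 := h z x y
      simp only [map_sub, map_smul, LinearMap.sub_apply, LinearMap.smul_apply,
        smul_sub] at h1 h2 h3 ⊢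
      linear_combination (norm := module) (2:F)⁻¹ • (h1 + h2 + h3)
        + (q^2/2) • (hp x y z - hp x z y + hp y z x)
end

section
/- Let A be a vector space over a field F of characteristic 0 with a bilinear operation ∗, let q ∈ F with q ≠ 0, q ≠ 1, q ≠ −1, and define x∘y = x∗y − q(y∗x). Then (A,∗) is a pre-Lie algebra satisfying (2+q)([x,y]∗z) + (−q²−2q)(z∗[x,y]) + (q²−q)((z∗y)∗x − (z∗x)∗y) = 0 for all x,y,z (where [x,y] = x∗y − y∗x) if and only if (A,∘) is an anti-pre-Lie algebra satisfying (2+q)([x,y]'∘z) − q²(z∘[x,y]') + (q²+q)((z∘x)∘y − (z∘y)∘x) = 0 for all x,y,z, where [x,y]' = x∘y − y∘x. -/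
private lemma smul_cancel' {F A : Type*} [Field F] [AddCommGroup A] [Module F A]
    {d : F} (hd : d ≠ 0) {a b : A} (h : d • a = d • b) : a = b := by
  have h2 := congrArg (fun v => d⁻¹ • v) h
  simpa [smul_smul, inv_mul_cancel₀ hd] using h2

/-- `(A,∗)` is a pre-Lie algebra satisfying (3.19) iff its `(−q)`-algebra `(A,∘)` is an
anti-pre-Lie algebra satisfying (3.20). -/
theorem preLie_subclass_iff_negQAlgebra_antiPreLie_subclass
    {F A : Type*} [Field F] [CharZero F] [AddCommGroup A] [Module F A]
    (m : A →ₗ[F] A →ₗ[F] A)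
    (q : F) (hq0 : q ≠ 0) (hq1 : q ≠ 1) (hqm1 : q ≠ -1) :
    let c : A → A → A := fun x y => m x y - q • m y x
    ((IsPreLie (fun x y => m x y) ∧
        ∀ x y z : A,
          (2 + q) • m (m x y - m y x) z + (-q ^ 2 - 2 * q) • m z (m x y - m y x)
            + (q ^ 2 - q) • (m (m z y) x - m (m z x) y) = 0) ↔
      (IsAntiPreLie c ∧
        ∀ x y z : A,
          (2 + q) • c (c x y - c y x) z - q ^ 2 • c z (c x y - c y x)
            + (q ^ 2 + q) • (c (c z x) y - c (c z y) x) = 0)) := by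
  intro c
  have hqp1 : q + 1 ≠ 0 := fun h => hqm1 (by linear_combination h)
  have hqs1 : q - 1 ≠ 0 := sub_ne_zero.mpr hq1
  have h2ne : (2 : F) ≠ 0 := two_ne_zero
  constructor
  · rintro ⟨hPL, hE1⟩
    have pl : ∀ a b d : A, m (m a b) d - m a (m b d) = m (m b a) d - m b (m a d) := hPL
    have e1 : ∀ a b d : A,
        (2 + q) • (m (m a b) d - m (m b a) d)
          + (-q ^ 2 - 2 * q) • (m d (m a b) - m d (m b a))
          + (q ^ 2 - q) • (m (m d b) a - m (m d a) b) = 0 := by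
      intro a b d
      have h := hE1 a b d
      simp only [map_sub, LinearMap.sub_apply] at h
      linear_combination (norm := module) h
    refine ⟨fun x y z => ⟨?_, ?_⟩, ?_⟩
    · show c x (c y z) - c y (c x z) = c (c y x - c x y) z
      simp only [c, map_sub, map_smul, LinearMap.sub_apply, LinearMap.smul_apply]
      linear_combination (norm := module)
        (-1 : F) • pl x y z + q • pl x z y + (-q) • pl y z x + e1 x y z
    · show c (c x y - c y x) z + c (c y z - c z y) x + c (c z x - c x z) y = 0
      apply smul_cancel' h2ne (a := _) (b := (0 : A))
      simp only [c, map_sub, map_smul, LinearMap.sub_apply, LinearMap.smul_apply]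
      linear_combination (norm := module)
        (q ^ 2) • pl x y z + (-q ^ 2) • pl x z y + (q ^ 2) • pl y z x
          + e1 x y z + (-1 : F) • e1 x z y + e1 y z x
    · intro x y z
      simp only [c, map_sub, map_smul, LinearMap.sub_apply, LinearMap.smul_apply]
      linear_combination (norm := module)
        (q ^ 3 + q ^ 4) • pl x y z + (-q ^ 2 - q ^ 3) • pl x z y
          + (q ^ 2 + q ^ 3) • pl y z x + (1 + q) • e1 x y z
  · rintro ⟨hAP, hE2⟩
    have h1 : ∀ a b d : A,
        (1 + q : F) • m (m a b) d
          + (q : F) • m (m a d) b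
          + (-1 - q : F) • m (m b a) d
          + (-q : F) • m (m b d) a
          + (-q ^ 2 : F) • m (m d a) b
          + (q ^ 2 : F) • m (m d b) a
          + (1 : F) • m a (m b d)
          + (-q : F) • m a (m d b)
          + (-1 : F) • m b (m a d)
          + (q : F) • m b (m d a)
          + (-q - q ^ 2 : F) • m d (m a b)
          + (q + q ^ 2 : F) • m d (m b a) = 0 := by
      intro a b d
      have h := (hAP a b d).1
      simp only [c, map_sub, map_smul, LinearMap.sub_apply, LinearMap.smul_apply] at h
      linear_combination (norm := module) h
    have h2 : ∀ a b d : A,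
        (1 + q : F) • m (m a b) d
          + (-1 - q : F) • m (m a d) b
          + (-1 - q : F) • m (m b a) d
          + (1 + q : F) • m (m b d) a
          + (1 + q : F) • m (m d a) b
          + (-1 - q : F) • m (m d b) a
          + (-q - q ^ 2 : F) • m a (m b d)
          + (q + q ^ 2 : F) • m a (m d b)
          + (q + q ^ 2 : F) • m b (m a d)
          + (-q - q ^ 2 : F) • m b (m d a)
          + (-q - q ^ 2 : F) • m d (m a b)
          + (q + q ^ 2 : F) • m d (m b a) = 0 := by
      intro a b d
      have h := (hAP a b d).2
      simp only [c, map_sub, map_smul, LinearMap.sub_apply, LinearMap.smul_apply] at h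
      linear_combination (norm := module) h
    have h3 : ∀ a b d : A,
        (2 + 3 * q + q ^ 2 + q ^ 3 + q ^ 4 : F) • m (m a b) d
          + (-q ^ 2 - q ^ 3 : F) • m (m a d) b
          + (-2 - 3 * q - q ^ 2 - q ^ 3 - q ^ 4 : F) • m (m b a) d
          + (q ^ 2 + q ^ 3 : F) • m (m b d) a
          + (q + q ^ 2 : F) • m (m d a) b
          + (-q - q ^ 2 : F) • m (m d b) a
          + (-q ^ 3 - q ^ 4 : F) • m a (m b d)
          + (q ^ 2 + q ^ 3 : F) • m a (m d b)
          + (q ^ 3 + q ^ 4 : F) • m b (m a d)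
          + (-q ^ 2 - q ^ 3 : F) • m b (m d a)
          + (-2 * q - 4 * q ^ 2 - 2 * q ^ 3 : F) • m d (m a b)
          + (2 * q + 4 * q ^ 2 + 2 * q ^ 3 : F) • m d (m b a) = 0 := by
      intro a b d
      have h := hE2 a b d
      simp only [c, map_sub, map_smul, LinearMap.sub_apply, LinearMap.smul_apply] at h
      linear_combination (norm := module) h
    constructor
    · intro x y z
      show m (m x y) z - m x (m y z) = m (m y x) z - m y (m x z)
      apply smul_cancel' (d := (q - 1) ^ 2 * (q + 1) ^ 2)
        (mul_ne_zero (pow_ne_zero _ hqs1) (pow_ne_zero _ hqp1))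
      linear_combination (norm := module)
        (-1 : F) • h1 x y z + (-q) • h1 x z y + q • h1 y z x
          + (-2 * q) • h2 x y z + h3 x y z
    · intro x y z
      apply smul_cancel' (d := (q - 1) * (q + 1) ^ 2)
        (mul_ne_zero hqs1 (pow_ne_zero _ hqp1)) (b := (0 : A))
      simp only [map_sub, LinearMap.sub_apply]
      linear_combination (norm := module)
        (q ^ 3) • h1 x y z + (q ^ 2) • h1 x z y + (-q ^ 2) • h1 y z x
          + (2 * q ^ 2) • h2 x y z + (-1 : F) • h3 x y z
end

section
/- Let (A,≻,≺) be a Novikov-type dendriform algebra over a field F of characteristic 0. Then the bilinear operation x∗y = x≻y − y≺x makes (A,∗) a Novikov algebra, i.e. (x∗y)∗z − x∗(y∗z) = (y∗x)∗z − y∗(x∗z) and (x∗y)∗z = (x∗z)∗y for all x,y,z ∈ A. -/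
/-- The associated pre-Lie algebra `x∗y = x≻y − y≺x` of a Novikov-type dendriform algebra
is a Novikov algebra. -/
theorem novikovTypeDendriform_associated_is_novikov
    {F A : Type*} [Field F] [CharZero F] [AddCommGroup A] [Module F A]
    (s p : A →ₗ[F] A →ₗ[F] A)
    (hd : IsDendriform (fun x y => s x y) (fun x y => p x y))
    (h₁ : ∀ x y z : A, s x (s y z) = p (p x y) z)
    (h₂ : ∀ x y z : A, s (p x y) z = p x (s y z))
    (h₃ : ∀ x y z : A, p x (p y z) = 0) :
    let m : A → A → A := fun x y => s x y - p y x
    (IsPreLie m ∧ ∀ x y z : A, m (m x y) z = m (m x z) y) := by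
  intro m
  have D1 : ∀ x y z : A, s x (s y z) = s (s x y) z + s (p x y) z := by
    intro x y z
    have := (hd x y z).1
    simpa [map_add, LinearMap.add_apply] using this
  have E2a : ∀ x y z : A, p x (s y z) = s x (s y z) := by
    intro x y z
    have h := (hd x y z).2.1
    rw [h₁ x y z]
    simpa [map_add, h₃ x y z] using h.symm
  have E2b : ∀ x y z : A, s (p x y) z = s x (s y z) := by
    intro x y z
    rw [h₂ x y z, E2a]
  have E1 : ∀ x y z : A, s (s x y) z = 0 := by
    intro x y z
    have := D1 x y z
    rw [E2b x y z] at this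
    have h' : s (s x y) z + s x (s y z) = 0 + s x (s y z) := by
      rw [zero_add]; exact this.symm
    exact add_right_cancel h'
  have D3 : ∀ x y z : A, p (s x y) z = s x (p y z) := fun x y z => (hd x y z).2.2
  have key : ∀ x y z : A, m (m x y) z = - s y (s x z) - s z (s x y) := by
    intro x y z
    show s (s x y - p y x) z - p z (s x y - p y x) = _
    simp only [map_sub, LinearMap.sub_apply, E1, E2b, h₃, E2a]
    abel
  have key2 : ∀ x y z : A, m x (m y z)
      = s x (s y z) - s x (p z y) - s y (p z x) + s z (s y x) := by
    intro x y z
    show s x (s y z - p z y) - p (s y z - p z y) x = _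
    have h4 : p (p z y) x = s z (s y x) := by
      have := (hd z y x).2.1
      simpa [map_add, h₃, E2a] using this
    simp only [map_sub, LinearMap.sub_apply, h4, D3]
    abel
  constructor
  · intro x y z
    rw [key x y z, key2 x y z, key y x z, key2 y x z]
    abel
  · intro x y z
    rw [key x y z, key x z y]
    abel
end
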